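/- With the Gauss-sequence model of a knotoid diagram D with n ≥ 3 crossings: let d(D) = min_a d(D_a) and d(−D) = min_a d((−D)_a). Then d(D) + d(−D) + 1 ≤ n, and equality holds if and only if D is alternating (over- and under-passages strictly alternate along the diagram). -/

import Mathlib

/-- The label of position `p` relative to base point `a`, i.e. the order in which position `p`
is encountered when traversing the `2*n` positions cyclically starting at base point `a`. -/
def relLabel (n : ℕ) (a : Fin (2 * n + 1)) (p : Fin (2 * n)) : ℕ :=
  (p.val + 2 * n - a.val) % (2 * n)

/-- The warping degree of the diagram with Gauss sequence `o, u` at base point `a`. -/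
def warpingDegree (n : ℕ) (o u : Fin n → Fin (2 * n)) (a : Fin (2 * n + 1)) : ℕ :=
  (Finset.univ.filter fun c => relLabel n a (u c) < relLabel n a (o c)).card

/-- The position `p ↦ 2n - 1 - p` of the reversed diagram. -/
def revPos (n : ℕ) (p : Fin (2 * n)) : Fin (2 * n) :=
  ⟨2 * n - 1 - p.val, by have := p.isLt; omega⟩

/-- The base point of the reversed diagram corresponding to base point `a`. -/
def revBase (n : ℕ) (a : Fin (2 * n + 1)) : Fin (2 * n + 1) :=
  ⟨2 * n - a.val, by have := a.isLt; omega⟩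

/-- The cutting number of crossing `c` at base point `a`: `2α − β − γ` where `α` is the
relabeled position of the over-passage, `β` that of the under-passage and `γ = β + 1`. -/
def cutNum (n : ℕ) (o u : Fin n → Fin (2 * n)) (a : Fin (2 * n + 1)) (c : Fin n) : ℤ :=
  2 * (relLabel n a (o c) : ℤ) - (relLabel n a (u c) : ℤ) - ((relLabel n a (u c) : ℤ) + 1)

/-- The diagram is alternating: along consecutive positions, over-passages and
under-passages strictly alternate. -/
def IsAlternating (n : ℕ) (o u : Fin n → Fin (2 * n)) : Prop :=
  ∀ p q : Fin (2 * n), p.val + 1 = q.val → ((∃ c, o c = p) ↔ (∃ c, u c = q))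


/-
The warping degree changes by exactly one when the base point crosses a single position: it goes
up when the base point passes an over-crossing and down when it passes an under-crossing. Reversing
the orientation swaps, for every crossing, which of its two passages comes first, so
`d((−D)_b) + d(D_{b*}) = n`; hence `d(−D) = n − max_b d(D_b)` and
`d(D) + d(−D) = n − (max_b d(D_b) − min_b d(D_b))`. The spread `max − min` is therefore at least one.
Two consecutive passages of the same kind would give a jump by two, so spread one forces alternation;
conversely, in an alternating diagram every two consecutive steps cancel, so `d(D_b)` only depends
on the parity of `b`.
-/

open Function Finset

theorem Finset.card_filter_eq_card_filter_add_one {α : Type*} [Fintype α] [DecidableEq α]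
    {P Q : α → Prop} [DecidablePred P] [DecidablePred Q] (c₀ : α) (hP : ¬ P c₀) (hQ : Q c₀)
    (hPQ : ∀ c, c ≠ c₀ → (P c ↔ Q c)) :
    #(univ.filter Q) = #(univ.filter P) + 1 := by
  have : univ.filter Q = insert c₀ (univ.filter P) := by
    ext c
    by_cases hc : c = c₀
    · simp [hc, hQ]
    · simp [hc, hPQ c hc]
  rw [this, card_insert_of_notMem (by simp [hP])]

section Relabel

variable {n : ℕ}

theorem relLabel_eq (a : Fin (2 * n + 1)) (p : Fin (2 * n)) :
    relLabel n a p = if a.val ≤ p.val then p.val - a.val else p.val + 2 * n - a.val := by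
  have := a.isLt
  unfold relLabel
  split_ifs with h
  · rw [show p.val + 2 * n - a.val = p.val - a.val + 2 * n by omega, Nat.add_mod_right,
      Nat.mod_eq_of_lt (by omega)]
  · exact Nat.mod_eq_of_lt (by omega)

theorem relLabel_lt (a : Fin (2 * n + 1)) (p : Fin (2 * n)) : relLabel n a p < 2 * n :=
  Nat.mod_lt _ (by have := p.isLt; omega)

theorem relLabel_injective (a : Fin (2 * n + 1)) : Injective (relLabel n a) := by
  intro p q h
  have := a.isLt
  rw [relLabel_eq, relLabel_eq] at h
  ext
  split_ifs at h <;> omega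

theorem relLabel_castSucc_self (p : Fin (2 * n)) : relLabel n p.castSucc p = 0 := by
  rw [relLabel_eq]
  simp

theorem relLabel_succ_self (p : Fin (2 * n)) : relLabel n p.succ p = 2 * n - 1 := by
  rw [relLabel_eq]
  simp only [Fin.val_succ]
  split_ifs <;> omega

theorem relLabel_castSucc_of_ne {p x : Fin (2 * n)} (hx : x ≠ p) :
    relLabel n p.castSucc x = relLabel n p.succ x + 1 := by
  have := x.isLt
  have hx' : x.val ≠ p.val := Fin.val_ne_of_ne hx
  rw [relLabel_eq, relLabel_eq]
  simp only [Fin.val_castSucc, Fin.val_succ]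
  split_ifs <;> omega

theorem relLabel_revPos_add_relLabel_revBase (b : Fin (2 * n + 1)) (p : Fin (2 * n)) :
    relLabel n b (revPos n p) + relLabel n (revBase n b) p = 2 * n - 1 := by
  have := p.isLt
  have := b.isLt
  have hp : (revPos n p).val = 2 * n - 1 - p.val := rfl
  have hb : (revBase n b).val = 2 * n - b.val := rfl
  rw [relLabel_eq, relLabel_eq, hp, hb]
  split_ifs <;> omega

theorem revBase_revBase (b : Fin (2 * n + 1)) : revBase n (revBase n b) = b := by
  have := b.isLt
  ext
  simp only [revBase]
  omega

end Relabel

section GaussCode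

variable {n : ℕ} {o u : Fin n → Fin (2 * n)}

theorem over_ne_under (hval : Injective (Sum.elim o u)) (c c' : Fin n) : o c ≠ u c' :=
  hval.ne (Sum.inl_ne_inr (b := c'))

theorem over_injective (hval : Injective (Sum.elim o u)) : Injective o :=
  hval.comp Sum.inl_injective

theorem under_injective (hval : Injective (Sum.elim o u)) : Injective u :=
  hval.comp Sum.inr_injective

theorem exists_under_iff_not_exists_over (hval : Injective (Sum.elim o u)) (p : Fin (2 * n)) :
    (∃ c, u c = p) ↔ ¬ ∃ c, o c = p := by
  constructor
  · rintro ⟨c, rfl⟩ ⟨c', hc'⟩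
    exact over_ne_under hval c' c hc'
  · intro hover
    have hsurj : Surjective (Sum.elim o u) :=
      ((Fintype.bijective_iff_injective_and_card _).mpr ⟨hval, by simp; omega⟩).surjective
    obtain ⟨c | c, hc⟩ := hsurj p
    · exact absurd ⟨c, hc⟩ hover
    · exact ⟨c, hc⟩

theorem warpingDegree_succ_of_over (hval : Injective (Sum.elim o u)) {p : Fin (2 * n)}
    (hp : ∃ c, o c = p) :
    warpingDegree n o u p.succ = warpingDegree n o u p.castSucc + 1 := by
  obtain ⟨c₀, rfl⟩ := hp
  refine card_filter_eq_card_filter_add_one c₀ ?_ ?_ fun c hc => ?_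
  · simp [relLabel_castSucc_self]
  · have := relLabel_castSucc_of_ne (over_ne_under hval c₀ c₀).symm
    have := relLabel_lt (o c₀).castSucc (u c₀)
    rw [relLabel_succ_self]
    omega
  · rw [relLabel_castSucc_of_ne (over_ne_under hval c₀ c).symm,
      relLabel_castSucc_of_ne ((over_injective hval).ne hc)]
    omega

theorem warpingDegree_castSucc_of_under (hval : Injective (Sum.elim o u)) {p : Fin (2 * n)}
    (hp : ∃ c, u c = p) :
    warpingDegree n o u p.castSucc = warpingDegree n o u p.succ + 1 := by
  obtain ⟨c₀, rfl⟩ := hp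
  refine card_filter_eq_card_filter_add_one c₀ ?_ ?_ fun c hc => ?_
  · have := relLabel_lt (u c₀).succ (o c₀)
    rw [relLabel_succ_self]
    omega
  · rw [relLabel_castSucc_self, relLabel_castSucc_of_ne (over_ne_under hval c₀ c₀)]
    omega
  · rw [relLabel_castSucc_of_ne ((under_injective hval).ne hc),
      relLabel_castSucc_of_ne (over_ne_under hval c c₀)]
    omega

theorem warpingDegree_succ_or_castSucc (hval : Injective (Sum.elim o u)) (p : Fin (2 * n)) :
    warpingDegree n o u p.succ = warpingDegree n o u p.castSucc + 1 ∨
      warpingDegree n o u p.castSucc = warpingDegree n o u p.succ + 1 := by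
  by_cases hover : ∃ c, o c = p
  · exact .inl (warpingDegree_succ_of_over hval hover)
  · exact .inr (warpingDegree_castSucc_of_under hval
      ((exists_under_iff_not_exists_over hval p).mpr hover))

theorem warpingDegree_rev_add_warpingDegree (hval : Injective (Sum.elim o u))
    (b : Fin (2 * n + 1)) :
    warpingDegree n (fun c => revPos n (o c)) (fun c => revPos n (u c)) b +
      warpingDegree n o u (revBase n b) = n := by
  have hcompl : ∀ c, relLabel n b (revPos n (u c)) < relLabel n b (revPos n (o c)) ↔
      ¬ relLabel n (revBase n b) (u c) < relLabel n (revBase n b) (o c) := fun c => by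
    have := relLabel_revPos_add_relLabel_revBase b (u c)
    have := relLabel_revPos_add_relLabel_revBase b (o c)
    have := (relLabel_injective (revBase n b)).ne (over_ne_under hval c c)
    omega
  unfold warpingDegree
  rw [filter_congr fun c _ => hcompl c, add_comm, card_filter_add_card_filter_not]
  simp

theorem warpingDegree_add_two_of_isAlternating (hval : Injective (Sum.elim o u))
    (halt : IsAlternating n o u) {p q : Fin (2 * n)} (hpq : p.val + 1 = q.val) :
    warpingDegree n o u q.succ = warpingDegree n o u p.castSucc := by
  have hqp : q.castSucc = p.succ := Fin.ext hpq.symm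
  by_cases hover : ∃ c, o c = p
  · have h₁ := warpingDegree_succ_of_over hval hover
    have h₂ := warpingDegree_castSucc_of_under hval ((halt p q hpq).mp hover)
    rw [hqp] at h₂
    omega
  · have hunder := (exists_under_iff_not_exists_over hval p).mpr hover
    have hover' : ∃ c, o c = q := by
      by_contra h
      exact hover ((halt p q hpq).mpr ((exists_under_iff_not_exists_over hval q).mpr h))
    have h₁ := warpingDegree_castSucc_of_under hval hunder
    have h₂ := warpingDegree_succ_of_over hval hover'
    rw [hqp] at h₂
    omega

theorem warpingDegree_eq_or_of_isAlternating (hval : Injective (Sum.elim o u))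
    (halt : IsAlternating n o u) (hn : 0 < n) (b : Fin (2 * n + 1)) :
    warpingDegree n o u b = warpingDegree n o u ⟨0, by omega⟩ ∨
      warpingDegree n o u b = warpingDegree n o u ⟨1, by omega⟩ := by
  obtain ⟨t, ht⟩ := b
  induction t using Nat.strong_induction_on with
  | _ t ih =>
    match t, ih with
    | 0, _ => exact .inl rfl
    | 1, _ => exact .inr rfl
    | s + 2, ih =>
      have := warpingDegree_add_two_of_isAlternating hval halt
        (p := ⟨s, by omega⟩) (q := ⟨s + 1, by omega⟩) rfl
      simp only [Fin.succ_mk, Fin.castSucc_mk] at this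
      rw [this]
      exact ih s (by omega) _

theorem isAlternating_iff_warpingDegree_le_add_one (hval : Injective (Sum.elim o u)) :
    IsAlternating n o u ↔ ∀ b b', warpingDegree n o u b ≤ warpingDegree n o u b' + 1 := by
  constructor
  · intro halt b b'
    rcases Nat.eq_zero_or_pos n with rfl | hn
    · obtain rfl : b = b' := Fin.ext (by omega)
      omega
    have hstep := warpingDegree_succ_or_castSucc hval ⟨0, by omega⟩
    simp only [Fin.succ_mk, Fin.castSucc_mk, zero_add] at hstep
    rcases warpingDegree_eq_or_of_isAlternating hval halt hn b with h | h <;>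
      rcases warpingDegree_eq_or_of_isAlternating hval halt hn b' with h' | h' <;> omega
  · intro hspread p q hpq
    have hqp : q.castSucc = p.succ := Fin.ext hpq.symm
    rw [exists_under_iff_not_exists_over hval q]
    constructor
    · intro hover hover'
      have h₁ := warpingDegree_succ_of_over hval hover
      have h₂ := warpingDegree_succ_of_over hval hover'
      rw [hqp] at h₂
      have := hspread q.succ p.castSucc
      omega
    · intro hover'
      by_contra hover
      have h₁ := warpingDegree_castSucc_of_under hval
        ((exists_under_iff_not_exists_over hval p).mpr hover)
      have h₂ := warpingDegree_castSucc_of_under hval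
        ((exists_under_iff_not_exists_over hval q).mpr hover')
      rw [hqp] at h₂
      have := hspread p.castSucc q.succ
      omega

end GaussCode

/-- Theorem 4.1: for a diagram `D` with `n ≥ 3` crossings, `d(D) + d(−D) + 1 ≤ n`, with
equality iff `D` is alternating. -/
theorem warpingDegree_add_rev_lt_crossings (n : ℕ) (hn : 3 ≤ n)
    (o u : Fin n → Fin (2 * n))
    (hval : Function.Injective (Sum.elim o u : Fin n ⊕ Fin n → Fin (2 * n)))
    (a a' : Fin (2 * n + 1))
    (ha : ∀ b, warpingDegree n o u a ≤ warpingDegree n o u b)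
    (ha' : ∀ b, warpingDegree n (fun c => revPos n (o c)) (fun c => revPos n (u c)) a' ≤
      warpingDegree n (fun c => revPos n (o c)) (fun c => revPos n (u c)) b) :
    warpingDegree n o u a +
        warpingDegree n (fun c => revPos n (o c)) (fun c => revPos n (u c)) a' + 1 ≤ n ∧
    (warpingDegree n o u a +
        warpingDegree n (fun c => revPos n (o c)) (fun c => revPos n (u c)) a' + 1 = n ↔
      IsAlternating n o u) := by
  have hrev := warpingDegree_rev_add_warpingDegree hval a'
  have hmax : ∀ b, warpingDegree n o u b ≤ warpingDegree n o u (revBase n a') := fun b => by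
    have := warpingDegree_rev_add_warpingDegree hval (revBase n b)
    rw [revBase_revBase] at this
    have := ha' (revBase n b)
    omega
  have hspread : warpingDegree n o u a + 1 ≤ warpingDegree n o u (revBase n a') := by
    let p : Fin (2 * n) := ⟨0, by omega⟩
    have := warpingDegree_succ_or_castSucc hval p
    have := ha p.castSucc
    have := ha p.succ
    have := hmax p.castSucc
    have := hmax p.succ
    omega
  refine ⟨by omega, ?_⟩
  rw [isAlternating_iff_warpingDegree_le_add_one hval]
  constructor
  · intro hsum b b'
    have := hmax b
    have := ha b'
    omega
  · intro h
    have := h (revBase n a') a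
    omega
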